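/- If a finite-dimensional left Leibniz algebra A is characteristically semisimple (its maximal solvable characteristic ideal equals Leib(A)), then the Lie algebra A/Leib(A) is characteristically semisimple (its maximal solvable characteristic ideal is zero). -/
import Mathlib


section Defs
variable {F A : Type*} [Field F] [AddCommGroup A] [Module F A]

def IsLeibniz (b : A →ₗ[F] A →ₗ[F] A) : Prop :=
  ∀ x y z : A, b x (b y z) = b (b x y) z + b y (b x z)

def IsDer (b : A →ₗ[F] A →ₗ[F] A) (δ : A →ₗ[F] A) : Prop :=
  ∀ x y : A, δ (b x y) = b (δ x) y + b x (δ y)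

def IsIdeal (b : A →ₗ[F] A →ₗ[F] A) (I : Submodule F A) : Prop :=
  ∀ x y : A, x ∈ I → b x y ∈ I ∧ b y x ∈ I

/-- An ideal invariant under all derivations: a characteristic ideal. -/
def IsCharIdeal (b : A →ₗ[F] A →ₗ[F] A) (I : Submodule F A) : Prop :=
  IsIdeal b I ∧ ∀ δ : A →ₗ[F] A, IsDer b δ → I.map δ ≤ I

/-- The span of all brackets `[x, y]` with `x ∈ S`, `y ∈ T`. -/
def bracketSpan (b : A →ₗ[F] A →ₗ[F] A) (S T : Submodule F A) : Submodule F A :=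
  Submodule.span F {z | ∃ x ∈ S, ∃ y ∈ T, z = b x y}

/-- The derived series of a submodule. -/
def derSeries (b : A →ₗ[F] A →ₗ[F] A) (I : Submodule F A) : ℕ → Submodule F A
  | 0 => I
  | n + 1 => bracketSpan b (derSeries b I n) (derSeries b I n)

def IsSolvableIdl (b : A →ₗ[F] A →ₗ[F] A) (I : Submodule F A) : Prop :=
  ∃ k : ℕ, derSeries b I k = ⊥

end Defs

def Leib {F A : Type*} [Field F] [AddCommGroup A] [Module F A]
    (b : A →ₗ[F] A →ₗ[F] A) : Submodule F A :=
  Submodule.span F {z | ∃ x : A, z = b x x}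


section Aux
variable {F A : Type*} [Field F] [AddCommGroup A] [Module F A]

lemma bracketSpan_mono (b : A →ₗ[F] A →ₗ[F] A) {S S' T T' : Submodule F A}
    (hS : S ≤ S') (hT : T ≤ T') : bracketSpan b S T ≤ bracketSpan b S' T' :=
  Submodule.span_mono (fun z ⟨x, hx, y, hy, hz⟩ => ⟨x, hS hx, y, hT hy, hz⟩)

lemma derSeries_mono (b : A →ₗ[F] A →ₗ[F] A) {I J : Submodule F A} (h : I ≤ J) :
    ∀ n, derSeries b I n ≤ derSeries b J n := by
  intro n
  induction n with
  | zero => exact h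
  | succ n ih => exact bracketSpan_mono b ih ih

lemma derSeries_add (b : A →ₗ[F] A →ₗ[F] A) (I : Submodule F A) (k : ℕ) :
    ∀ n, derSeries b I (k + n) = derSeries b (derSeries b I k) n := by
  intro n
  induction n with
  | zero => rfl
  | succ n ih =>
    show bracketSpan _ _ _ = bracketSpan _ _ _
    exact congrArg₂ (bracketSpan b) ih ih

end Aux

/-- If a finite-dimensional left Leibniz algebra `A` is characteristically semisimple
(its maximal solvable characteristic ideal equals `Leib(A)`), then the Lie algebra
`A/Leib(A)` is characteristically semisimple: its maximal solvable characteristic ideal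
is zero. -/
theorem charSemisimple_quotient_charSemisimple
    {F A : Type*} [Field F] [AddCommGroup A] [Module F A] [FiniteDimensional F A]
    (b : A →ₗ[F] A →ₗ[F] A) (hb : IsLeibniz b)
    (hLchar : IsCharIdeal b (Leib b)) (hLsolv : IsSolvableIdl b (Leib b))
    (hmax : ∀ S : Submodule F A, IsCharIdeal b S → IsSolvableIdl b S → S ≤ Leib b)
    (bq : (A ⧸ Leib b) →ₗ[F] (A ⧸ Leib b) →ₗ[F] (A ⧸ Leib b))
    (hbq : ∀ x y : A, bq ((Leib b).mkQ x) ((Leib b).mkQ y) = (Leib b).mkQ (b x y)) :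
    ∀ S : Submodule F (A ⧸ Leib b), IsCharIdeal bq S → IsSolvableIdl bq S → S = ⊥ := by
  intro S hSchar hSsolv
  have hmapT : (S.comap (Leib b).mkQ).map (Leib b).mkQ = S :=
    Submodule.map_comap_eq_of_surjective (Submodule.mkQ_surjective (Leib b)) S
  -- T := S.comap mkQ is an ideal
  have hTideal : IsIdeal b (S.comap (Leib b).mkQ) := by
    intro x y hx
    rw [Submodule.mem_comap] at hx
    constructor
    · show (Leib b).mkQ (b x y) ∈ S
      rw [← hbq]
      exact (hSchar.1 ((Leib b).mkQ x) ((Leib b).mkQ y) hx).1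
    · show (Leib b).mkQ (b y x) ∈ S
      rw [← hbq]
      exact (hSchar.1 ((Leib b).mkQ x) ((Leib b).mkQ y) hx).2
  -- T is characteristic
  have hTchar : IsCharIdeal b (S.comap (Leib b).mkQ) := by
    refine ⟨hTideal, fun δ hδ => ?_⟩
    have hLδ : Leib b ≤ (Leib b).comap δ := by
      rw [← Submodule.map_le_iff_le_comap]
      exact hLchar.2 δ hδ
    have hcomm : ∀ x : A, (Leib b).mapQ (Leib b) δ hLδ ((Leib b).mkQ x) = (Leib b).mkQ (δ x) :=
      fun x => Submodule.mapQ_apply (Leib b) (Leib b) δ x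
    have hδqder : IsDer bq ((Leib b).mapQ (Leib b) δ hLδ) := by
      intro u v
      obtain ⟨x, rfl⟩ := (Leib b).mkQ_surjective u
      obtain ⟨y, rfl⟩ := (Leib b).mkQ_surjective v
      rw [hbq, hcomm, hδ, map_add, ← hbq, ← hbq, hcomm, hcomm]
    rw [Submodule.map_le_iff_le_comap]
    intro x hx
    rw [Submodule.mem_comap] at hx ⊢
    rw [Submodule.mem_comap]
    show (Leib b).mkQ (δ x) ∈ S
    rw [← hcomm]
    exact hSchar.2 _ hδqder ⟨(Leib b).mkQ x, hx, rfl⟩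
  -- derived series of T maps into derived series of S
  have hder : ∀ n, (derSeries b (S.comap (Leib b).mkQ) n).map (Leib b).mkQ ≤ derSeries bq S n := by
    intro n
    induction n with
    | zero => exact hmapT.le
    | succ n ih =>
      show (bracketSpan b _ _).map (Leib b).mkQ ≤ bracketSpan bq _ _
      rw [bracketSpan, Submodule.map_span]
      apply Submodule.span_le.2
      rintro _ ⟨_, ⟨x, hx, y, hy, rfl⟩, rfl⟩
      rw [← hbq]
      exact Submodule.subset_span
        ⟨(Leib b).mkQ x, ih ⟨x, hx, rfl⟩, (Leib b).mkQ y, ih ⟨y, hy, rfl⟩, rfl⟩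
  -- T is solvable
  obtain ⟨k, hk⟩ := hSsolv
  obtain ⟨m, hm⟩ := hLsolv
  have hTk : derSeries b (S.comap (Leib b).mkQ) k ≤ Leib b := by
    intro x hx
    have hmem : (Leib b).mkQ x ∈ derSeries bq S k := hder k ⟨x, hx, rfl⟩
    rw [hk, Submodule.mem_bot] at hmem
    exact (Submodule.Quotient.mk_eq_zero (Leib b)).1 hmem
  have hTsolv : IsSolvableIdl b (S.comap (Leib b).mkQ) := by
    refine ⟨k + m, ?_⟩
    rw [derSeries_add]
    exact le_bot_iff.1 ((derSeries_mono b hTk m).trans hm.le)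
  have hle := hmax _ hTchar hTsolv
  rw [← hmapT, eq_bot_iff]
  rintro _ ⟨x, hx, rfl⟩
  rw [Submodule.mem_bot]
  exact (Submodule.Quotient.mk_eq_zero (Leib b)).2 (hle hx)
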